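/- arXiv:2405.07810 — 3 statements merged into one kernel-verified Lean document; each statement's English description precedes it below -/
import Mathlib

section
/- For any A ∈ SL(2,ℝ), one has ‖A²‖/‖A‖ − 3 ≤ |2 − tr(A)| ≤ ‖A²‖/‖A‖ + 3 ≤ ‖A‖ + 3, where ‖·‖ is the operator norm. -/
/-!
By Cayley–Hamilton, `A ^ 2 = (tr A) • A - 1`, so the triangle inequality puts `‖A ^ 2‖` within `1`
of `|tr A| * ‖A‖`. Moreover `‖A‖ ≥ 1`: the adjugate of a `2 × 2` matrix is the transpose conjugated
by a rotation, hence has the same norm, and `1 = ‖A * adj A‖ ≤ ‖A‖ ^ 2`. Dividing by `‖A‖` puts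
`‖A ^ 2‖ / ‖A‖` within `1` of `|tr A|`, which is within `2` of `|2 - tr A|`.
-/

open scoped Matrix.Norms.L2Operator

theorem abs_abs_mul_norm_sub_norm_sq_le {E : Type*} [NormedRing E] [NormedAlgebra ℝ E]
    [NormOneClass E] {x : E} {t : ℝ} (hx : x ^ 2 = t • x - 1) :
    |(|t| * ‖x‖ - ‖x ^ 2‖)| ≤ 1 := by
  have h := abs_norm_sub_norm_le (x ^ 2) (t • x)
  rwa [abs_sub_comm, hx, sub_sub_cancel_left, norm_neg, norm_one, ← hx, norm_smul,
    Real.norm_eq_abs] at h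

theorem abs_abs_sub_norm_sq_div_norm_le {E : Type*} [NormedRing E] [NormedAlgebra ℝ E]
    [NormOneClass E] {x : E} {t : ℝ} (hx : x ^ 2 = t • x - 1) (h1 : 1 ≤ ‖x‖) :
    |(|t| - ‖x ^ 2‖ / ‖x‖)| ≤ 1 := by
  have hpos : 0 < ‖x‖ := one_pos.trans_le h1
  calc |(|t| - ‖x ^ 2‖ / ‖x‖)| = |(|t| * ‖x‖ - ‖x ^ 2‖)| / ‖x‖ := by
        rw [← abs_of_pos hpos, ← abs_div, abs_of_pos hpos, sub_div,
          mul_div_cancel_right₀ _ hpos.ne']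
    _ ≤ 1 / 1 := div_le_div₀ zero_le_one (abs_abs_mul_norm_sub_norm_sq_le hx) one_pos h1
    _ = 1 := div_one 1

namespace Matrix

variable {R : Type*} [CommRing R]

theorem sq_fin_two_eq_trace_smul_sub_det_smul (A : Matrix (Fin 2) (Fin 2) R) :
    A ^ 2 = A.trace • A - A.det • 1 := by
  nontriviality R
  have h := A.aeval_self_charpoly
  rw [charpoly_fin_two] at h
  simp only [map_add, Polynomial.aeval_sub, map_pow, Polynomial.aeval_X, map_mul,
    Polynomial.aeval_C, Algebra.algebraMap_eq_smul_one, Algebra.smul_mul_assoc, one_mul] at h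
  rw [← sub_eq_zero, ← h]
  abel

theorem adjugate_fin_two_eq_mul_transpose_mul (A : Matrix (Fin 2) (Fin 2) R) :
    A.adjugate = !![0, -1; 1, 0] * Aᵀ * !![0, -1; 1, 0]ᵀ := by
  rw [eta_fin_two A, adjugate_fin_two]
  ext i j
  fin_cases i <;> fin_cases j <;> simp [mul_apply, vecMul, dotProduct, Fin.sum_univ_two]

theorem l2_opNorm_adjugate_fin_two (A : Matrix (Fin 2) (Fin 2) ℝ) : ‖A.adjugate‖ = ‖A‖ := by
  have hJ : !![(0 : ℝ), -1; 1, 0] ∈ unitary (Matrix (Fin 2) (Fin 2) ℝ) := by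
    rw [Unitary.mem_iff, star_eq_conjTranspose, conjTranspose_eq_transpose_of_trivial]
    constructor <;> ext i j <;> fin_cases i <;> fin_cases j <;> simp [mul_apply, Fin.sum_univ_two]
  rw [adjugate_fin_two_eq_mul_transpose_mul, ← conjTranspose_eq_transpose_of_trivial,
    ← conjTranspose_eq_transpose_of_trivial, ← star_eq_conjTranspose, ← star_eq_conjTranspose,
    CStarRing.norm_mul_mem_unitary _ (Unitary.star_mem hJ), CStarRing.norm_mem_unitary_mul _ hJ,
    norm_star]

theorem abs_det_le_l2_opNorm_sq_fin_two (A : Matrix (Fin 2) (Fin 2) ℝ) : |A.det| ≤ ‖A‖ ^ 2 :=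
  calc |A.det| = ‖A * A.adjugate‖ := by
        rw [mul_adjugate, norm_smul, norm_one, mul_one, Real.norm_eq_abs]
    _ ≤ ‖A‖ * ‖A.adjugate‖ := norm_mul_le _ _
    _ = ‖A‖ ^ 2 := by rw [l2_opNorm_adjugate_fin_two, sq]

end Matrix

/-- For `A ∈ SL(2,ℝ)` (i.e. `det A = 1`), with `‖·‖` the (ℓ²) operator norm,
`‖A²‖/‖A‖ − 3 ≤ |2 − tr A| ≤ ‖A²‖/‖A‖ + 3 ≤ ‖A‖ + 3`. -/
theorem trace_bounds_of_SL2 (A : Matrix (Fin 2) (Fin 2) ℝ) (hA : A.det = 1) :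
    ‖A ^ 2‖ / ‖A‖ - 3 ≤ |2 - A.trace| ∧
      |2 - A.trace| ≤ ‖A ^ 2‖ / ‖A‖ + 3 ∧
        ‖A ^ 2‖ / ‖A‖ + 3 ≤ ‖A‖ + 3 := by
  have hCH : A ^ 2 = A.trace • A - 1 := by
    rw [A.sq_fin_two_eq_trace_smul_sub_det_smul, hA, one_smul]
  have hnorm : 1 ≤ ‖A‖ :=
    (one_le_sq_iff₀ (norm_nonneg A)).1 (by simpa [hA] using A.abs_det_le_l2_opNorm_sq_fin_two)
  have hquot := abs_abs_sub_norm_sq_div_norm_le hCH hnorm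
  have htrace : |(|2 - A.trace| - |A.trace|)| ≤ 2 := by
    simpa using abs_abs_sub_abs_le_abs_sub (2 - A.trace) (-A.trace)
  have hsq : ‖A ^ 2‖ / ‖A‖ ≤ ‖A‖ :=
    div_le_of_le_mul₀ (norm_nonneg A) (norm_nonneg A) (sq A ▸ norm_mul_le A A)
  rw [abs_le] at hquot htrace
  refine ⟨?_, ?_, ?_⟩ <;> linarith
end

section
/- Let ω be irrational with convergent denominator q = q_n, and let R ≥ 1. Then Σ_{1 ≤ |k| < q/4} 1/(1 + R²‖kω‖²) ≤ 2π q / R. -/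
/-!
Write `θ k = k ω - round (k ω)`, so that `distInt (k ω) = |θ k|`. Indices with
`1 ≤ |k| < q/4` differ by less than `q`, so the points `θ k` are `1/(2q)`-separated from each
other and from `0`. On each side of `0`, the floor of `2q |θ k|` is therefore an injective
labelling by `1, …, q`, and comparing `1/(1 + R²t²)` at `t = |θ k|` and at `t = m/(2q)` bounds
the sum by
`2 ∑_{m ≥ 1} 1/(1 + (R m/(2q))²) ≤ 2 ∫_0^∞ dt/(1 + (R t/(2q))²) = 2π q/R`.
-/

/-- Distance from a real number to the nearest integer. -/
noncomputable def distInt (x : ℝ) : ℝ := |x - round x|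

open Finset Real

theorem distInt_sub_le (x y : ℝ) : distInt (x - y) ≤ |(x - round x) - (y - round y)| := by
  simpa [distInt, sub_sub_sub_comm] using round_le (x - y) (round x - round y)

theorem antitoneOn_one_div_one_add_mul_sq (c : ℝ) :
    AntitoneOn (fun t : ℝ => 1 / (1 + (c * t) ^ 2)) (Set.Ici 0) := by
  intro s hs t _ hst
  have : (c * s) ^ 2 ≤ (c * t) ^ 2 := by
    rw [mul_pow, mul_pow]; gcongr
  dsimp only
  gcongr

theorem sum_Icc_one_div_one_add_mul_sq_le {c : ℝ} (hc : 0 < c) (N : ℕ) :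
    ∑ m ∈ Icc 1 N, 1 / (1 + (c * m) ^ 2) ≤ π / (2 * c) := by
  have hsum :=
    ((antitoneOn_one_div_one_add_mul_sq c).mono Set.Icc_subset_Ici_self).sum_le_integral
      (x₀ := 0) (a := N)
  have hint : ∫ x in (0 : ℝ)..N, 1 / (1 + (c * x) ^ 2) = arctan (c * N) / c := by
    rw [intervalIntegral.integral_comp_mul_left (fun y => 1 / (1 + y ^ 2)) hc.ne',
      integral_one_div_one_add_sq]
    simp [div_eq_inv_mul]
  simp only [zero_add] at hsum
  rw [hint] at hsum
  calc ∑ m ∈ Icc 1 N, 1 / (1 + (c * m) ^ 2)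
      = ∑ i ∈ range N, 1 / (1 + (c * ((i + 1 : ℕ) : ℝ)) ^ 2) := by
        rw [range_eq_Ico, sum_Ico_add' (fun m : ℕ => 1 / (1 + (c * m) ^ 2))]
        rfl
    _ ≤ arctan (c * N) / c := hsum
    _ ≤ π / 2 / c := by gcongr; exact (arctan_lt_pi_div_two _).le
    _ = π / (2 * c) := by ring

section Packing

variable {ι : Type*} {S : Finset ι} {x : ι → ℝ} {f : ℝ → ℝ} {δ : ℝ} {N : ℕ}

theorem sum_le_sum_Icc_of_separated (hδ : 0 < δ) (hf : AntitoneOn f (Set.Ici 0))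
    (hf0 : ∀ t, 0 ≤ t → 0 ≤ f t) (hx : ∀ k ∈ S, δ ≤ x k ∧ x k ≤ N * δ)
    (hsep : ∀ k₁ ∈ S, ∀ k₂ ∈ S, k₁ ≠ k₂ → δ ≤ |x k₁ - x k₂|) :
    ∑ k ∈ S, f (x k) ≤ ∑ m ∈ Icc 1 N, f (m * δ) := by
  set level : ι → ℕ := fun k => ⌊x k / δ⌋₊
  have level_le : ∀ k ∈ S, (level k : ℝ) ≤ x k / δ := fun k hk =>
    Nat.floor_le (div_nonneg (hδ.le.trans (hx k hk).1) hδ.le)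
  have lt_level : ∀ k, x k / δ < level k + 1 := fun k => Nat.lt_floor_add_one _
  have level_mem : ∀ k ∈ S, level k ∈ Icc 1 N := fun k hk => by
    obtain ⟨hlo, hhi⟩ := hx k hk
    refine mem_Icc.2 ⟨Nat.le_floor ?_, Nat.floor_le_of_le ?_⟩
    · rwa [Nat.cast_one, le_div_iff₀ hδ, one_mul]
    · rwa [div_le_iff₀ hδ]
  have level_inj : Set.InjOn level S := by
    intro k₁ hk₁ k₂ hk₂ heq
    by_contra hne
    have h₁ := level_le k₁ hk₁
    have h₂ := level_le k₂ hk₂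
    have h₁' := lt_level k₁
    have h₂' := lt_level k₂
    rw [heq] at h₁ h₁'
    have : |x k₁ / δ - x k₂ / δ| < 1 := abs_sub_lt_iff.2 ⟨by linarith, by linarith⟩
    rw [← sub_div, abs_div, abs_of_pos hδ, div_lt_one hδ] at this
    exact (hsep k₁ hk₁ k₂ hk₂ hne).not_gt this
  calc ∑ k ∈ S, f (x k) ≤ ∑ k ∈ S, f (level k * δ) := sum_le_sum fun k hk => by
        have hpos : 0 ≤ (level k : ℝ) * δ := by positivity
        exact hf hpos (hpos.trans ((le_div_iff₀ hδ).1 (level_le k hk)))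
          ((le_div_iff₀ hδ).1 (level_le k hk))
    _ = ∑ m ∈ S.image level, f (m * δ) :=
        (sum_image (f := fun m : ℕ => f (m * δ)) level_inj).symm
    _ ≤ ∑ m ∈ Icc 1 N, f (m * δ) :=
        sum_le_sum_of_subset_of_nonneg (image_subset_iff.2 level_mem)
          fun m _ _ => hf0 _ (by positivity)

theorem sum_abs_le_two_mul_sum_Icc_of_separated (hδ : 0 < δ) (hf : AntitoneOn f (Set.Ici 0))
    (hf0 : ∀ t, 0 ≤ t → 0 ≤ f t) (hx : ∀ k ∈ S, δ ≤ |x k| ∧ |x k| ≤ N * δ)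
    (hsep : ∀ k₁ ∈ S, ∀ k₂ ∈ S, k₁ ≠ k₂ → δ ≤ |x k₁ - x k₂|) :
    ∑ k ∈ S, f |x k| ≤ 2 * ∑ m ∈ Icc 1 N, f (m * δ) := by
  rw [← sum_filter_add_sum_filter_not S (fun k => 0 < x k), two_mul]
  gcongr
  · rw [sum_congr rfl fun k hk => by rw [abs_of_pos (mem_filter.1 hk).2]]
    refine sum_le_sum_Icc_of_separated hδ hf hf0 (fun k hk => ?_)
      fun k₁ hk₁ k₂ hk₂ => hsep k₁ (mem_filter.1 hk₁).1 k₂ (mem_filter.1 hk₂).1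
    simpa [abs_of_pos (mem_filter.1 hk).2] using hx k (mem_filter.1 hk).1
  · rw [sum_congr rfl fun k hk => by rw [abs_of_nonpos (not_lt.1 (mem_filter.1 hk).2)]]
    refine sum_le_sum_Icc_of_separated hδ hf hf0 (fun k hk => ?_)
      fun k₁ hk₁ k₂ hk₂ hne => ?_
    · simpa [abs_of_nonpos (not_lt.1 (mem_filter.1 hk).2)] using hx k (mem_filter.1 hk).1
    · rw [neg_sub_neg, abs_sub_comm]
      exact hsep k₁ (mem_filter.1 hk₁).1 k₂ (mem_filter.1 hk₂).1 hne

end Packing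

theorem fejer_sum_small_freq_general (ω : ℝ) (q : ℕ)
    (hsep : ∀ k₁ k₂ : ℤ, k₁ ≠ k₂ → |k₁ - k₂| < (q : ℤ) →
      1 / (2 * (q : ℝ)) ≤ distInt (((k₁ : ℝ) - (k₂ : ℝ)) * ω))
    (R : ℝ) (hR : 1 ≤ R) :
    ∑ k ∈ (Finset.Icc (-(q : ℤ)) (q : ℤ)).filter
        (fun k => 1 ≤ |k| ∧ 4 * |k| < (q : ℤ)),
      1 / (1 + R ^ 2 * distInt ((k : ℝ) * ω) ^ 2) ≤ 2 * Real.pi * (q : ℝ) / R := by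
  set S := (Finset.Icc (-(q : ℤ)) (q : ℤ)).filter (fun k => 1 ≤ |k| ∧ 4 * |k| < (q : ℤ))
  rcases Nat.eq_zero_or_pos q with rfl | hq
  · have : S = ∅ := filter_false_of_mem fun k _ hk => by omega
    simp [this]
  have hR0 : 0 < R := one_pos.trans_le hR
  have hq0 : (0 : ℝ) < q := Nat.cast_pos.2 hq
  have hmem : ∀ k ∈ S, k ≠ 0 ∧ 4 * |k| < q := fun k hk => by
    obtain ⟨-, h1, h4⟩ := mem_filter.1 hk
    exact ⟨by rintro rfl; simp at h1, h4⟩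
  set θ : ℤ → ℝ := fun k => k * ω - round (k * ω)
  have hθsep : ∀ k₁ ∈ S, ∀ k₂ ∈ S, k₁ ≠ k₂ → 1 / (2 * (q : ℝ)) ≤ |θ k₁ - θ k₂| :=
    fun k₁ hk₁ k₂ hk₂ hne => by
      have := abs_sub k₁ k₂
      have := hmem k₁ hk₁
      have := hmem k₂ hk₂
      exact (hsep k₁ k₂ hne (by omega)).trans (by rw [sub_mul]; exact distInt_sub_le _ _)
  have hθ : ∀ k ∈ S, 1 / (2 * (q : ℝ)) ≤ |θ k| ∧ |θ k| ≤ q * (1 / (2 * q)) :=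
    fun k hk => by
      obtain ⟨hk0, hk4⟩ := hmem k hk
      have h := hsep k 0 hk0 (by rw [sub_zero]; omega)
      rw [Int.cast_zero, sub_zero] at h
      exact ⟨h, (abs_sub_round _).trans_eq (by field_simp)⟩
  calc ∑ k ∈ S, 1 / (1 + R ^ 2 * distInt ((k : ℝ) * ω) ^ 2)
      = ∑ k ∈ S, 1 / (1 + (R * |θ k|) ^ 2) := by simp only [mul_pow]; rfl
    _ ≤ 2 * ∑ m ∈ Icc 1 q, 1 / (1 + (R * (m * (1 / (2 * q)))) ^ 2) :=
        sum_abs_le_two_mul_sum_Icc_of_separated (by positivity)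
          (antitoneOn_one_div_one_add_mul_sq R) (fun _ _ => by positivity) hθ hθsep
    _ = 2 * ∑ m ∈ Icc 1 q, 1 / (1 + (R / (2 * q) * m) ^ 2) := by
        congr! 4 with m; ring
    _ ≤ 2 * (π / (2 * (R / (2 * q)))) := by
        gcongr; exact sum_Icc_one_div_one_add_mul_sq_le (by positivity) q
    _ = 2 * π * q / R := by field_simp

/-- For an irrational `ω` with continued-fraction denominator `q = q_n` (recorded
through the standard facts `‖kω‖ ≥ 1/(2q)` for `0 < |k| < q`) and any `R ≥ 1`,
`Σ_{1 ≤ |k| < q/4} 1/(1 + R²‖kω‖²) ≤ 2π q / R`. -/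
theorem fejer_sum_small_freq (ω : ℝ) (hirr : Irrational ω) (q : ℕ) (hq : 1 ≤ q)
    (hmin : ∀ k : ℤ, k ≠ 0 → |k| < (q : ℤ) → 1 / (2 * (q : ℝ)) ≤ distInt ((k : ℝ) * ω))
    (hsep : ∀ k₁ k₂ : ℤ, k₁ ≠ k₂ → |k₁ - k₂| < (q : ℤ) →
      1 / (2 * (q : ℝ)) ≤ distInt (((k₁ : ℝ) - (k₂ : ℝ)) * ω))
    (R : ℝ) (hR : 1 ≤ R) :
    ∑ k ∈ (Finset.Icc (-(q : ℤ)) (q : ℤ)).filter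
        (fun k => 1 ≤ |k| ∧ 4 * |k| < (q : ℤ)),
      1 / (1 + R ^ 2 * distInt ((k : ℝ) * ω) ^ 2) ≤ 2 * Real.pi * (q : ℝ) / R :=
  fejer_sum_small_freq_general ω q hsep R hR
end

section
/- Let ω be irrational with n-th convergent denominator q := q_n, R ≥ 1, and ℓ ≥ 1 an integer. Then Σ_{ℓq/4 ≤ k < (ℓ+1)q/4} 1/(1 + R²‖kω‖²) ≤ 2 + 2π q / R. -/
open Finset Real

lemma distInt_eq_min (x : ℝ) : distInt x = min (Int.fract x) (1 - Int.fract x) :=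
  abs_sub_round_eq_min x

lemma distInt_nonneg (x : ℝ) : 0 ≤ distInt x := abs_nonneg _

lemma distInt_add_int (x : ℝ) (m : ℤ) : distInt (x + m) = distInt x := by
  rw [distInt_eq_min, distInt_eq_min, Int.fract_add_intCast]

lemma distInt_le_abs_of (y : ℝ) (h1 : -1 < y) (h2 : y < 1) : distInt y ≤ |y| := by
  rw [distInt_eq_min]
  rcases le_or_gt 0 y with h | h
  · rw [Int.fract_eq_self.mpr ⟨h, h2⟩, abs_of_nonneg h]; exact min_le_left _ _
  · have hfl : ⌊y⌋ = -1 := Int.floor_eq_iff.mpr (by constructor <;> push_cast <;> linarith)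
    have hf : Int.fract y = y + 1 := by rw [Int.fract, hfl]; push_cast; ring
    rw [hf, abs_of_neg h]
    have he : 1 - (y + 1) = -y := by ring
    rw [he]
    exact min_le_right _ _

lemma distInt_sub_le_s8 (a b : ℝ) :
    distInt (a - b) ≤ |Int.fract a - Int.fract b| := by
  have h : a - b = (Int.fract a - Int.fract b) + ((⌊a⌋ - ⌊b⌋ : ℤ) : ℝ) := by
    push_cast; simp only [Int.fract]; ring
  rw [h, distInt_add_int]
  have h1 := Int.fract_nonneg a
  have h2 := Int.fract_lt_one a
  have h3 := Int.fract_nonneg b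
  have h4 := Int.fract_lt_one b
  exact distInt_le_abs_of _ (by linarith) (by linarith)

lemma arctan_step (c : ℝ) (hc : 0 < c) (n : ℕ) :
    c / (1 + (c * (n + 1)) ^ 2) ≤ arctan (c * (n + 1)) - arctan (c * n) := by
  have hab : c * n ≤ c * (n + 1) := by nlinarith
  have hcont : Continuous fun x : ℝ => 1 / (1 + x ^ 2) :=
    continuous_const.div (by continuity) (fun x => by positivity)
  have h1 : (∫ x in (c * n)..(c * (n + 1)), (1 : ℝ) / (1 + x ^ 2))
      = arctan (c * (n + 1)) - arctan (c * n) := by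
    simpa using integral_one_div_one_add_sq (a := c * n) (b := c * (n + 1))
  have h2 : (∫ _x in (c * n)..(c * (n + 1)), (1 : ℝ) / (1 + (c * (n + 1)) ^ 2))
      ≤ ∫ x in (c * n)..(c * (n + 1)), (1 : ℝ) / (1 + x ^ 2) := by
    apply intervalIntegral.integral_mono_on hab intervalIntegrable_const
      (hcont.intervalIntegrable _ _)
    intro x hx
    have hx0 : 0 ≤ x := le_trans (by positivity) hx.1
    have hx1 : x ≤ c * (n + 1) := hx.2
    apply one_div_le_one_div_of_le (by positivity)
    nlinarith
  rw [intervalIntegral.integral_const, h1] at h2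
  have he : (c * (n + 1) - c * n) • ((1 : ℝ) / (1 + (c * (n + 1)) ^ 2))
      = c / (1 + (c * (n + 1)) ^ 2) := by
    rw [smul_eq_mul]; ring
  linarith [he ▸ h2]

/-- Generic counting bound: if the values `v k`, `k ∈ s`, are nonnegative and pairwise
`1/(2q)`-separated, then `∑ 1/(1+R²·v²) ≤ 1 + πq/R`. -/
lemma block_sum_le (q : ℕ) (hq : 1 ≤ q) (R : ℝ) (hR : 1 ≤ R)
    (s : Finset ℤ) (v : ℤ → ℝ) (hv0 : ∀ k ∈ s, 0 ≤ v k)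
    (hsep : ∀ k₁ ∈ s, ∀ k₂ ∈ s, k₁ ≠ k₂ → 1 / (2 * (q : ℝ)) ≤ |v k₁ - v k₂|) :
    ∑ k ∈ s, 1 / (1 + R ^ 2 * v k ^ 2) ≤ 1 + Real.pi * q / R := by
  classical
  have hq0 : (0 : ℝ) < q := by exact_mod_cast hq
  have hR0 : (0 : ℝ) < R := lt_of_lt_of_le one_pos hR
  set c : ℝ := R / (2 * q) with hc
  have hc0 : 0 < c := by positivity
  set J : ℤ → ℕ := fun k => (⌊2 * (q : ℝ) * v k⌋).toNat with hJdef
  have hJcast : ∀ k ∈ s, ((J k : ℤ) : ℝ) = ((⌊2 * (q : ℝ) * v k⌋ : ℤ) : ℝ) := by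
    intro k hk
    have h0 : 0 ≤ 2 * (q : ℝ) * v k := by have := hv0 k hk; positivity
    simp only [hJdef]
    exact_mod_cast congrArg (fun z : ℤ => (z : ℝ))
      (Int.toNat_of_nonneg (Int.floor_nonneg.mpr h0))
  have hJle : ∀ k ∈ s, (J k : ℝ) ≤ 2 * q * v k := by
    intro k hk
    have := hJcast k hk
    push_cast at this
    rw [this]
    exact Int.floor_le _
  -- injectivity of J on s
  have hinj : ∀ k₁ ∈ s, ∀ k₂ ∈ s, J k₁ = J k₂ → k₁ = k₂ := by
    intro k₁ h₁ k₂ h₂ he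
    by_contra hne
    have hs := hsep k₁ h₁ k₂ h₂ hne
    have hfe : ⌊2 * (q : ℝ) * v k₁⌋ = ⌊2 * (q : ℝ) * v k₂⌋ := by
      have e1 := hJcast k₁ h₁
      have e2 := hJcast k₂ h₂
      rw [he] at e1
      exact_mod_cast e1.symm.trans e2
    have hd : |2 * (q : ℝ) * v k₁ - 2 * q * v k₂| < 1 := by
      rw [abs_sub_lt_iff]
      constructor
      · have := Int.lt_floor_add_one (2 * (q : ℝ) * v k₁)
        have := Int.floor_le (2 * (q : ℝ) * v k₂)
        rw [hfe] at *
        linarith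
      · have := Int.lt_floor_add_one (2 * (q : ℝ) * v k₂)
        have := Int.floor_le (2 * (q : ℝ) * v k₁)
        rw [hfe] at *
        linarith
    have he2 : 2 * (q : ℝ) * v k₁ - 2 * q * v k₂ = (v k₁ - v k₂) * (2 * q) := by ring
    rw [he2, abs_mul, abs_of_pos (show (0:ℝ) < 2 * (q:ℝ) by positivity)] at hd
    have := (div_le_iff₀ (by positivity : (0:ℝ) < 2 * (q:ℝ))).mp hs
    linarith
  -- termwise bound by f (J k)
  have hterm : ∀ k ∈ s, 1 / (1 + R ^ 2 * v k ^ 2) ≤ 1 / (1 + c ^ 2 * (J k : ℝ) ^ 2) := by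
    intro k hk
    apply one_div_le_one_div_of_le (by positivity)
    have h1 : c * (J k : ℝ) ≤ R * v k := by
      have h2 := hJle k hk
      have : c * (2 * q * v k) = R * v k := by
        rw [hc]; field_simp
      nlinarith
    have hJ0 : (0 : ℝ) ≤ c * (J k : ℝ) := by positivity
    nlinarith
  -- define g
  set g : ℕ → ℝ := fun j =>
    Nat.casesOn j 1 (fun n => (arctan (c * (n + 1)) - arctan (c * n)) / c) with hg
  have hfg : ∀ j : ℕ, 1 / (1 + c ^ 2 * (j : ℝ) ^ 2) ≤ g j := by
    intro j
    cases j with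
    | zero => simp [hg]
    | succ n =>
      have h := arctan_step c hc0 n
      rw [hg]
      simp only [Nat.casesOn]
      rw [le_div_iff₀ hc0]
      have e : (1 : ℝ) / (1 + c ^ 2 * ((n + 1 : ℕ) : ℝ) ^ 2) * c
          = c / (1 + (c * ((n : ℝ) + 1)) ^ 2) := by
        push_cast; ring
      rw [e]
      exact h
  have hg0 : ∀ j : ℕ, 0 ≤ g j := by
    intro j
    cases j with
    | zero => norm_num [hg]
    | succ n =>
      have : arctan (c * (n : ℝ)) ≤ arctan (c * ((n : ℝ) + 1)) := by
        apply arctan_strictMono.monotone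
        nlinarith
      rw [hg]
      simp only [Nat.casesOn]
      apply div_nonneg (by linarith) hc0.le
  calc ∑ k ∈ s, 1 / (1 + R ^ 2 * v k ^ 2)
      ≤ ∑ k ∈ s, 1 / (1 + c ^ 2 * (J k : ℝ) ^ 2) := Finset.sum_le_sum hterm
    _ = ∑ j ∈ s.image J, 1 / (1 + c ^ 2 * (j : ℝ) ^ 2) := by rw [Finset.sum_image hinj]
    _ ≤ ∑ j ∈ s.image J, g j := Finset.sum_le_sum (fun j _ => hfg j)
    _ ≤ ∑ j ∈ Finset.range ((s.image J).sup id + 1), g j := by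
        apply Finset.sum_le_sum_of_subset_of_nonneg
        · intro j hj
          rw [Finset.mem_range]
          exact Nat.lt_succ_of_le (Finset.le_sup (f := id) hj)
        · intro j _ _; exact hg0 j
    _ ≤ 1 + Real.pi * q / R := by
        set N := (s.image J).sup id
        rw [Finset.sum_range_succ']
        have htel : ∑ i ∈ Finset.range N, g (i + 1) = arctan (c * N) / c := by
          have : ∀ i : ℕ, g (i + 1)
              = arctan (c * ((i : ℝ) + 1)) / c - arctan (c * (i : ℝ)) / c := by
            intro i; rw [hg]; simp only [Nat.casesOn]; ring
          rw [Finset.sum_congr rfl (fun i _ => this i)]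
          have := Finset.sum_range_sub (f := fun i : ℕ => arctan (c * (i : ℝ)) / c) N
          push_cast at this ⊢
          rw [this]
          simp [Real.arctan_zero]
        rw [htel]
        have hg0' : g 0 = 1 := rfl
        rw [hg0']
        have harc : arctan (c * (N : ℝ)) / c ≤ (Real.pi / 2) / c := by
          gcongr
          exact (arctan_lt_pi_div_two _).le
        have heq : (Real.pi / 2) / c = Real.pi * q / R := by
          rw [hc]; field_simp
        linarith

/-- For an irrational `ω` with continued-fraction denominator `q = q_n` (recorded
through the standard separation fact `‖(k₁−k₂)ω‖ ≥ 1/(2q)` for `0 < |k₁−k₂| < q`),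
`R ≥ 1`, and an integer `ℓ ≥ 1`:
`Σ_{ℓq/4 ≤ k < (ℓ+1)q/4} 1/(1 + R²‖kω‖²) ≤ 2 + 2π q / R`. -/
theorem fejer_sum_block (ω : ℝ) (hirr : Irrational ω) (q : ℕ) (hq : 1 ≤ q)
    (hsep : ∀ k₁ k₂ : ℤ, k₁ ≠ k₂ → |k₁ - k₂| < (q : ℤ) →
      1 / (2 * (q : ℝ)) ≤ distInt (((k₁ : ℝ) - (k₂ : ℝ)) * ω))
    (R : ℝ) (hR : 1 ≤ R) (ℓ : ℕ) (hℓ : 1 ≤ ℓ) :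
    ∑ k ∈ (Finset.Icc (0 : ℤ) ((ℓ + 1) * q)).filter
        (fun k => (ℓ : ℤ) * q ≤ 4 * k ∧ 4 * k < ((ℓ : ℤ) + 1) * q),
      1 / (1 + R ^ 2 * distInt ((k : ℝ) * ω) ^ 2) ≤ 2 + 2 * Real.pi * (q : ℝ) / R := by
  classical
  set S := (Finset.Icc (0 : ℤ) ((ℓ + 1) * q)).filter
      (fun k => (ℓ : ℤ) * q ≤ 4 * k ∧ 4 * k < ((ℓ : ℤ) + 1) * q) with hS
  -- separation of `distInt (k ω)` across the block
  have key : ∀ k₁ ∈ S, ∀ k₂ ∈ S, k₁ ≠ k₂ →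
      1 / (2 * (q : ℝ)) ≤ distInt ((k₁ : ℝ) * ω - (k₂ : ℝ) * ω) := by
    intro k₁ h₁ k₂ h₂ hne
    rw [hS, Finset.mem_filter, Finset.mem_Icc] at h₁ h₂
    have hBA : ((ℓ : ℤ) + 1) * q - (ℓ : ℤ) * q = (q : ℤ) := by ring
    have hlt : |k₁ - k₂| < (q : ℤ) := by
      rw [abs_lt]
      constructor <;> omega
    have h := hsep k₁ k₂ hne hlt
    have e : ((k₁ : ℝ) - (k₂ : ℝ)) * ω = (k₁ : ℝ) * ω - (k₂ : ℝ) * ω := by ring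
    rwa [e] at h
  set P : ℤ → Prop := fun k => Int.fract ((k : ℝ) * ω) ≤ 1 / 2 with hP
  -- class A: fract ≤ 1/2
  have hA : ∑ k ∈ S.filter P, 1 / (1 + R ^ 2 * distInt ((k : ℝ) * ω) ^ 2)
      ≤ 1 + Real.pi * q / R := by
    apply block_sum_le q hq R hR _ _ (fun k _ => distInt_nonneg _)
    intro k₁ h₁ k₂ h₂ hne
    have m₁ := Finset.mem_of_mem_filter k₁ h₁
    have m₂ := Finset.mem_of_mem_filter k₂ h₂
    have p₁ : P k₁ := (Finset.mem_filter.mp h₁).2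
    have p₂ : P k₂ := (Finset.mem_filter.mp h₂).2
    have e₁ : distInt ((k₁ : ℝ) * ω) = Int.fract ((k₁ : ℝ) * ω) := by
      rw [distInt_eq_min]; exact min_eq_left (by rw [hP] at p₁; linarith)
    have e₂ : distInt ((k₂ : ℝ) * ω) = Int.fract ((k₂ : ℝ) * ω) := by
      rw [distInt_eq_min]; exact min_eq_left (by rw [hP] at p₂; linarith)
    rw [e₁, e₂]
    exact le_trans (key k₁ m₁ k₂ m₂ hne) (distInt_sub_le_s8 _ _)
  -- class B: fract > 1/2
  have hB : ∑ k ∈ S.filter (fun k => ¬ P k), 1 / (1 + R ^ 2 * distInt ((k : ℝ) * ω) ^ 2)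
      ≤ 1 + Real.pi * q / R := by
    apply block_sum_le q hq R hR _ _ (fun k _ => distInt_nonneg _)
    intro k₁ h₁ k₂ h₂ hne
    have m₁ := Finset.mem_of_mem_filter k₁ h₁
    have m₂ := Finset.mem_of_mem_filter k₂ h₂
    have p₁ : ¬ P k₁ := (Finset.mem_filter.mp h₁).2
    have p₂ : ¬ P k₂ := (Finset.mem_filter.mp h₂).2
    rw [hP, not_le] at p₁ p₂
    have e₁ : distInt ((k₁ : ℝ) * ω) = 1 - Int.fract ((k₁ : ℝ) * ω) := by
      rw [distInt_eq_min]; exact min_eq_right (by linarith)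
    have e₂ : distInt ((k₂ : ℝ) * ω) = 1 - Int.fract ((k₂ : ℝ) * ω) := by
      rw [distInt_eq_min]; exact min_eq_right (by linarith)
    rw [e₁, e₂]
    have eabs : |1 - Int.fract ((k₁ : ℝ) * ω) - (1 - Int.fract ((k₂ : ℝ) * ω))|
        = |Int.fract ((k₁ : ℝ) * ω) - Int.fract ((k₂ : ℝ) * ω)| := by
      rw [abs_sub_comm]; congr 1; ring
    rw [eabs]
    exact le_trans (key k₁ m₁ k₂ m₂ hne) (distInt_sub_le_s8 _ _)
  have hsplit := Finset.sum_filter_add_sum_filter_not S P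
    (fun k => 1 / (1 + R ^ 2 * distInt ((k : ℝ) * ω) ^ 2))
  rw [← hsplit]
  have he2 : 2 + 2 * Real.pi * (q : ℝ) / R = (1 + Real.pi * q / R) + (1 + Real.pi * q / R) := by
    ring
  rw [he2]
  exact add_le_add hA hB
end
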